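/- Let p ∈ (1,∞]. Suppose the delay system ẋ(t) = f(x_t) is forward complete on C⁰ and there exists σ ∈ KL such that ‖φ(t,x₀)‖_{C^{0,1−1/p}} ≤ σ(‖x₀‖_{C^{0,1−1/p}}, t) for all t ≥ 0 and all x₀ ∈ C^{0,1−1/p}. Then there exists ω ∈ KL such that ‖φ(t,x₀)‖_{W^{1,p}} ≤ ω(‖x₀‖_{W^{1,p}}, t) for all t ≥ 0 and all x₀ ∈ W^{1,p}. -/

import Mathlib

open Set MeasureTheory Filter Topology
open scoped ENNReal NNReal

noncomputable section

abbrev Vec (n : ℕ) := EuclideanSpace ℝ (Fin n)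

variable {n : ℕ}

/-- The segment `x_t` of a history `x : ℝ → ℝⁿ`, i.e. `x_t(s) = x(t+s)`
(only its values on `[-r,0]` are relevant). -/
def seg (r : ℝ) (x : ℝ → Vec n) (t : ℝ) : ℝ → Vec n := fun s => x (t + s)

/-- Sup norm over `[-r,0]`. -/
def supN (r : ℝ) (g : ℝ → Vec n) : ℝ := sSup ((fun s => ‖g s‖) '' Icc (-r) 0)

/-- Membership in `C⁰ = C([-r,0];ℝⁿ)`. -/
def MemC0 (r : ℝ) (g : ℝ → Vec n) : Prop := ContinuousOn g (Icc (-r) 0)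

/-- `f` vanishes at `0`, depends only on the values of its argument on `[-r,0]`,
and is Lipschitz on bounded subsets of `C⁰` with a nondecreasing (nonnegative)
modulus `L`. -/
def GoodRHS (r : ℝ) (f : (ℝ → Vec n) → Vec n) (L : ℝ → ℝ) : Prop :=
  f 0 = 0 ∧
  (∀ x y : ℝ → Vec n, EqOn x y (Icc (-r) 0) → f x = f y) ∧
  Monotone L ∧ (∀ s : ℝ, 0 ≤ L s) ∧
  ∀ R : ℝ, ∀ x y : ℝ → Vec n, MemC0 r x → MemC0 r y → supN r x ≤ R → supN r y ≤ R →
    ‖f x - f y‖ ≤ L R * supN r (x - y)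

/-- `x : ℝ → ℝⁿ` is a solution on `[-r, b)` (with `b ∈ (0,∞]` an extended
nonnegative real) of the delay system `ẋ(t) = f(x_t)` with initial condition `x0`:
it is continuous on `[-r,b)`, coincides with `x0` on `[-r,0]`, and satisfies the
integral equation `x(t) = x(0) + ∫₀ᵗ f(x_s) ds` on `[0,b)`. -/
def IsSol (r : ℝ) (f : (ℝ → Vec n) → Vec n) (x0 x : ℝ → Vec n) (b : ℝ≥0∞) : Prop :=
  ContinuousOn x {t : ℝ | -r ≤ t ∧ ENNReal.ofReal t < b} ∧
  EqOn x x0 (Icc (-r) 0) ∧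
  ∀ t : ℝ, 0 ≤ t → ENNReal.ofReal t < b → x t = x 0 + ∫ s in (0:ℝ)..t, f (seg r x s)

/-- Class `KL` functions `σ : [0,∞)×[0,∞) → [0,∞)`. -/
def ClassKL (σ : ℝ → ℝ → ℝ) : Prop :=
  (∀ s t : ℝ, 0 ≤ s → 0 ≤ t → 0 ≤ σ s t) ∧
  (∀ t : ℝ, 0 ≤ t →
    ContinuousOn (fun s => σ s t) (Ici 0) ∧ StrictMonoOn (fun s => σ s t) (Ici 0) ∧
      σ 0 t = 0) ∧
  (∀ s : ℝ, 0 ≤ s →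
    AntitoneOn (fun t => σ s t) (Ici 0) ∧ Tendsto (fun t => σ s t) atTop (nhds 0))

/-- Class `K∞` functions `a : [0,∞) → [0,∞)`. -/
def ClassKInf (a : ℝ → ℝ) : Prop :=
  (∀ s : ℝ, 0 ≤ s → 0 ≤ a s) ∧ ContinuousOn a (Ici 0) ∧ StrictMonoOn a (Ici 0) ∧
  a 0 = 0 ∧ Tendsto a atTop atTop

/-- The set of Hölder difference quotients `‖g t - g s‖ / |t-s|^α` over a set `S`. -/
def hRatios (α : ℝ) (S : Set ℝ) (g : ℝ → Vec n) : Set ℝ :=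
  {c | ∃ t ∈ S, ∃ s ∈ S, t ≠ s ∧ c = ‖g t - g s‖ / |t - s| ^ α}

/-- Membership in the Hölder space `C^{0,α}([-r,0])`. -/
def MemHol (r α : ℝ) (g : ℝ → Vec n) : Prop :=
  MemC0 r g ∧ BddAbove (hRatios α (Icc (-r) 0) g)

/-- The Hölder norm `max(‖g‖_∞, [g]_α)`. -/
def holderNorm (r α : ℝ) (g : ℝ → Vec n) : ℝ :=
  max (supN r g) (sSup (hRatios α (Icc (-r) 0) g))

/-- Membership in the Sobolev space `W^{1,p}([-r,0])`: `g` is absolutely continuous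
on `[-r,0]` (i.e. the integral of an integrable function `d`, which is then its a.e.
derivative) with `d ∈ L^p((-r,0))`. -/
def MemW (r : ℝ) (p : ℝ≥0∞) (g : ℝ → Vec n) : Prop :=
  ∃ d : ℝ → Vec n, IntegrableOn d (Icc (-r) 0) ∧
    eLpNorm d p (volume.restrict (Ioo (-r) 0)) < ⊤ ∧
    ∀ t ∈ Icc (-r) 0, g t = g (-r) + ∫ s in (-r)..t, d s

/-- The Sobolev norm `‖g‖_∞ + ‖ġ‖_p`; for an absolutely continuous `g` the a.e.
derivative coincides a.e. on `(-r,0)` with `deriv g`. -/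
def sobNorm (r : ℝ) (p : ℝ≥0∞) (g : ℝ → Vec n) : ℝ :=
  supN r g + (eLpNorm (deriv g) p (volume.restrict (Ioo (-r) 0))).toReal

/-- The Hölder exponent `1 - 1/p`, with the convention `1/∞ = 0`. -/
def hexp (p : ℝ≥0∞) : ℝ := 1 - (p.toReal)⁻¹

/-! A `W^{1,p}` history on `[-r,0]` is `(1 - 1/p)`-Hölder with seminorm at most `‖ẋ‖_p`
(Hölder's inequality), so its Hölder norm is at most its Sobolev norm, and the hypothesis
bounds `‖x_t‖_∞` by `σ(‖x₀‖_{W^{1,p}}, t)`. It remains to bound `‖(x_t)'‖_p`. On the part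
`(-t, 0)` of `[-r, 0]` the derivative of `x_t` is `f(x_{t+s})`, which the Lipschitz bound at
`0` controls by `L(σ(·,0)) σ(·, t - r)`; the remaining part `(-r, -t)`, empty once `t ≥ r`,
carries a translate of `ẋ₀` and contributes at most `‖ẋ₀‖_p`. -/

theorem ENNReal.toReal_inv_le_one {p : ℝ≥0∞} (hp : 1 ≤ p) : p.toReal⁻¹ ≤ 1 := by
  rcases eq_or_ne p ⊤ with rfl | hp_top
  · simp
  · exact inv_le_one_of_one_le₀ (by simpa using ENNReal.toReal_mono hp_top hp)

theorem hexp_nonneg {p : ℝ≥0∞} (hp : 1 ≤ p) : 0 ≤ hexp p :=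
  sub_nonneg.2 (ENNReal.toReal_inv_le_one hp)

theorem eLpNorm_restrict_union_le {α E : Type*} [MeasurableSpace α] [NormedAddCommGroup E]
    {μ : Measure α} {f : α → E} {p : ℝ≥0∞} (hp : 1 ≤ p) (hf : AEStronglyMeasurable f μ)
    {s t : Set α} (hs : MeasurableSet s) (ht : MeasurableSet t) :
    eLpNorm f p (μ.restrict (s ∪ t)) ≤ eLpNorm f p (μ.restrict s) + eLpNorm f p (μ.restrict t) := by
  have hts : MeasurableSet (t \ s) := ht.diff hs
  rw [← union_sdiff_self (s := s) (t := t), ← eLpNorm_indicator_eq_eLpNorm_restrict (hs.union hts),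
    indicator_union_of_disjoint disjoint_sdiff_right]
  calc eLpNorm (fun a => s.indicator f a + (t \ s).indicator f a) p μ
      ≤ eLpNorm (s.indicator f) p μ + eLpNorm ((t \ s).indicator f) p μ :=
        eLpNorm_add_le (hf.indicator hs) (hf.indicator hts) hp
    _ ≤ eLpNorm f p (μ.restrict s) + eLpNorm f p (μ.restrict t) := by
        rw [eLpNorm_indicator_eq_eLpNorm_restrict hs, eLpNorm_indicator_eq_eLpNorm_restrict hts]
        gcongr
        exact sdiff_subset

section Interval

variable {E : Type*} [NormedAddCommGroup E] {p : ℝ≥0∞}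

theorem eLpNorm_restrict_Ioo_le_of_norm_le {g : ℝ → E} {a b C κ : ℝ} (hp : 1 ≤ p)
    (hκ : 1 ≤ κ) (hab : b - a ≤ κ) (hg : ∀ s ∈ Ioo a b, ‖g s‖ ≤ C) :
    eLpNorm g p (volume.restrict (Ioo a b)) ≤ ENNReal.ofReal (κ * C) := by
  have hκ' : 1 ≤ ENNReal.ofReal κ := by simpa using ENNReal.ofReal_le_ofReal hκ
  have hvol : volume.restrict (Ioo a b) univ ^ p.toReal⁻¹ ≤ ENNReal.ofReal κ :=
    calc volume.restrict (Ioo a b) univ ^ p.toReal⁻¹ ≤ ENNReal.ofReal κ ^ p.toReal⁻¹ := by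
          rw [Measure.restrict_apply_univ, Real.volume_Ioo]
          exact ENNReal.rpow_le_rpow (ENNReal.ofReal_le_ofReal hab) (by positivity)
      _ ≤ ENNReal.ofReal κ ^ (1 : ℝ) :=
          ENNReal.rpow_le_rpow_of_exponent_le hκ' (ENNReal.toReal_inv_le_one hp)
      _ = ENNReal.ofReal κ := ENNReal.rpow_one _
  calc eLpNorm g p (volume.restrict (Ioo a b))
      ≤ volume.restrict (Ioo a b) univ ^ p.toReal⁻¹ * ENNReal.ofReal C :=
        eLpNorm_le_of_ae_bound ((ae_restrict_iff' measurableSet_Ioo).2 (.of_forall hg))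
    _ ≤ ENNReal.ofReal (κ * C) := by
        rw [ENNReal.ofReal_mul (by linarith)]
        gcongr

theorem norm_integral_le_eLpNorm_mul_rpow [NormedSpace ℝ E] {d : ℝ → E} {s t : ℝ} (hst : s ≤ t)
    (hp : 1 ≤ p) (hd : AEStronglyMeasurable d (volume.restrict (Ioc s t)))
    (hfin : eLpNorm d p (volume.restrict (Ioc s t)) ≠ ⊤) :
    ‖∫ u in s..t, d u‖ ≤ (eLpNorm d p (volume.restrict (Ioc s t))).toReal * (t - s) ^ hexp p := by
  have hholder : eLpNorm d 1 (volume.restrict (Ioc s t)) ≤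
      eLpNorm d p (volume.restrict (Ioc s t)) * ENNReal.ofReal (t - s) ^ hexp p := by
    simpa [Real.volume_Ioc, hexp] using eLpNorm_le_eLpNorm_mul_rpow_measure_univ hp hd
  have hbound : ‖∫ u in s..t, d u‖ₑ ≤
      eLpNorm d p (volume.restrict (Ioc s t)) * ENNReal.ofReal (t - s) ^ hexp p := by
    refine le_trans ?_ hholder
    rw [intervalIntegral.integral_of_le hst, eLpNorm_one_eq_lintegral_enorm]
    exact enorm_integral_le_lintegral_enorm _
  have hfin' : eLpNorm d p (volume.restrict (Ioc s t)) * ENNReal.ofReal (t - s) ^ hexp p ≠ ⊤ :=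
    ENNReal.mul_ne_top hfin (ENNReal.rpow_ne_top_of_nonneg (hexp_nonneg hp) ENNReal.ofReal_ne_top)
  rw [← toReal_enorm]
  convert ENNReal.toReal_mono hfin' hbound using 1
  rw [ENNReal.toReal_mul, ← ENNReal.toReal_rpow, ENNReal.toReal_ofReal (sub_nonneg.2 hst)]

theorem deriv_ae_eq_of_eq_add_integral [NormedSpace ℝ E] [CompleteSpace E] {g d : ℝ → E}
    {a b : ℝ} (hd : IntervalIntegrable d volume a b)
    (hg : ∀ t ∈ Ioo a b, g t = g a + ∫ s in a..t, d s) :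
    deriv g =ᵐ[volume.restrict (Ioo a b)] d := by
  filter_upwards [ae_restrict_of_ae hd.ae_hasDerivAt_integral, ae_restrict_mem measurableSet_Ioo]
    with u hu hmem
  have hF := (hu (Icc_subset_uIcc (Ioo_subset_Icc_self hmem)) a left_mem_uIcc).const_add (g a)
  exact (hF.congr_of_eventuallyEq (eventually_of_mem (isOpen_Ioo.mem_nhds hmem) hg)).deriv

end Interval

/-- A continuous monotone majorant of a monotone `L`; `L` itself need not be continuous, but a
`KL` bound built from it must be continuous in its first argument. -/
def unitAverage (L : ℝ → ℝ) (s : ℝ) : ℝ := ∫ u in s..s + 1, L u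

theorem unitAverage_eq (L : ℝ → ℝ) (s : ℝ) : unitAverage L s = ∫ u in (0 : ℝ)..1, L (u + s) := by
  rw [intervalIntegral.integral_comp_add_right, zero_add, add_comm 1 s]
  rfl

namespace Monotone

variable {L : ℝ → ℝ}

theorem continuous_unitAverage (hL : Monotone L) : Continuous (unitAverage L) := by
  have hprim := intervalIntegral.continuous_primitive (μ := volume)
    (fun _ _ => hL.intervalIntegrable) (0 : ℝ)
  have hdiff : unitAverage L = fun s => (∫ u in (0 : ℝ)..s + 1, L u) - ∫ u in (0 : ℝ)..s, L u :=
    funext fun s => (intervalIntegral.integral_interval_sub_left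
      hL.intervalIntegrable hL.intervalIntegrable).symm
  rw [hdiff]
  exact (hprim.comp (continuous_add_const 1)).sub hprim

theorem monotone_unitAverage (hL : Monotone L) : Monotone (unitAverage L) := by
  intro a b hab
  rw [unitAverage_eq, unitAverage_eq]
  exact intervalIntegral.integral_mono_on zero_le_one
    (hL.comp (monotone_id.add_const a)).intervalIntegrable
    (hL.comp (monotone_id.add_const b)).intervalIntegrable fun u _ => hL (by gcongr)

theorem le_unitAverage (hL : Monotone L) (s : ℝ) : L s ≤ unitAverage L s := by
  rw [unitAverage_eq]
  calc L s = ∫ _ in (0 : ℝ)..1, L s := by simp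
    _ ≤ ∫ u in (0 : ℝ)..1, L (u + s) :=
      intervalIntegral.integral_mono_on zero_le_one intervalIntegrable_const
        (hL.comp (monotone_id.add_const s)).intervalIntegrable
        fun u hu => hL (le_add_of_nonneg_left hu.1)

end Monotone

namespace ClassKL

variable {σ τ : ℝ → ℝ → ℝ}

theorem add (hσ : ClassKL σ) (hτ : ClassKL τ) : ClassKL fun s t => σ s t + τ s t := by
  obtain ⟨hσ0, hσs, hσt⟩ := hσ
  obtain ⟨hτ0, hτs, hτt⟩ := hτ
  refine ⟨fun s t hs ht => add_nonneg (hσ0 s t hs ht) (hτ0 s t hs ht), fun t ht => ?_,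
    fun s hs => ?_⟩
  · obtain ⟨hσc, hσm, hσz⟩ := hσs t ht
    obtain ⟨hτc, hτm, hτz⟩ := hτs t ht
    exact ⟨hσc.add hτc, fun a ha b hb hab => add_lt_add (hσm ha hb hab) (hτm ha hb hab),
      by simp [hσz, hτz]⟩
  · obtain ⟨hσa, hσl⟩ := hσt s hs
    obtain ⟨hτa, hτl⟩ := hτt s hs
    exact ⟨hσa.add hτa, by simpa using hσl.add hτl⟩

theorem mul_left (hσ : ClassKL σ) {a : ℝ → ℝ} (ha : ∀ s, 0 ≤ s → 0 < a s)
    (hac : ContinuousOn a (Ici 0)) (ham : MonotoneOn a (Ici 0)) :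
    ClassKL fun s t => a s * σ s t := by
  obtain ⟨hσ0, hσs, hσt⟩ := hσ
  refine ⟨fun s t hs ht => mul_nonneg (ha s hs).le (hσ0 s t hs ht), fun t ht => ?_,
    fun s hs => ?_⟩
  · obtain ⟨hσc, hσm, hσz⟩ := hσs t ht
    refine ⟨hac.mul hσc, fun s₁ hs₁ s₂ hs₂ hs => ?_, by simp [hσz]⟩
    calc a s₁ * σ s₁ t < a s₁ * σ s₂ t := mul_lt_mul_of_pos_left (hσm hs₁ hs₂ hs) (ha s₁ hs₁)
      _ ≤ a s₂ * σ s₂ t := mul_le_mul_of_nonneg_right (ham hs₁ hs₂ hs.le) (hσ0 s₂ t hs₂ ht)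
  · obtain ⟨hσa, hσl⟩ := hσt s hs
    exact ⟨fun t₁ ht₁ t₂ ht₂ ht => mul_le_mul_of_nonneg_left (hσa ht₁ ht₂ ht) (ha s hs).le,
      by simpa using hσl.const_mul (a s)⟩

theorem comp_delay (hσ : ClassKL σ) (r : ℝ) : ClassKL fun s t => σ s (max 0 (t - r)) := by
  obtain ⟨hσ0, hσs, hσt⟩ := hσ
  refine ⟨fun s t hs _ => hσ0 s _ hs (le_max_left _ _), fun t _ => hσs _ (le_max_left _ _),
    fun s hs => ⟨fun t₁ _ t₂ _ ht => ?_, (hσt s hs).2.comp ?_⟩⟩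
  · exact (hσt s hs).1 (le_max_left 0 (t₁ - r)) (le_max_left 0 (t₂ - r)) (by gcongr)
  · exact tendsto_atTop_mono (fun t => le_max_right 0 (t - r))
      (tendsto_atTop_add_const_right atTop (-r) tendsto_id)

theorem mul_exp (r : ℝ) : ClassKL fun s t => s * Real.exp (r - t) := by
  refine ⟨fun s t hs _ => by positivity, fun t _ => ⟨by fun_prop,
    fun a _ b _ hab => mul_lt_mul_of_pos_right hab (Real.exp_pos _), zero_mul _⟩,
    fun s hs => ⟨fun t₁ _ t₂ _ ht => by dsimp only; gcongr, ?_⟩⟩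
  simpa [sub_eq_add_neg] using (Real.tendsto_exp_comp_nhds_zero.2
    (tendsto_atBot_add_const_left atTop r tendsto_neg_atTop_atBot)).const_mul s

end ClassKL

theorem supN_nonneg (r : ℝ) (g : ℝ → Vec n) : 0 ≤ supN r g :=
  Real.sSup_nonneg (by rintro _ ⟨s, -, rfl⟩; exact norm_nonneg _)

section SupN

variable {r : ℝ} {g : ℝ → Vec n}

theorem supN_le {C : ℝ} (hr : 0 ≤ r) (h : ∀ s ∈ Icc (-r) 0, ‖g s‖ ≤ C) : supN r g ≤ C :=
  Real.sSup_le (by rintro _ ⟨s, hs, rfl⟩; exact h s hs)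
    ((norm_nonneg _).trans (h 0 ⟨by linarith, le_rfl⟩))

theorem supN_zero (hr : 0 ≤ r) : supN r (0 : ℝ → Vec n) = 0 :=
  le_antisymm (supN_le hr (by simp)) (supN_nonneg r 0)

end SupN

theorem GoodRHS.norm_le {r R : ℝ} {f : (ℝ → Vec n) → Vec n} {L : ℝ → ℝ} {g : ℝ → Vec n}
    (hf : GoodRHS r f L) (hr : 0 ≤ r) (hg : MemC0 r g) (hgR : supN r g ≤ R) :
    ‖f g‖ ≤ L R * supN r g := by
  have h := hf.2.2.2.2 R g 0 hg continuousOn_const hgR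
    ((supN_zero hr).trans_le ((supN_nonneg r g).trans hgR))
  rwa [hf.1, sub_zero, sub_zero] at h

namespace MemW

variable {r : ℝ} {p : ℝ≥0∞} {g : ℝ → Vec n}

theorem eLpNorm_deriv_eq {d : ℝ → Vec n} (hr : 0 ≤ r) (hd : IntegrableOn d (Icc (-r) 0))
    (hg : ∀ t ∈ Icc (-r) 0, g t = g (-r) + ∫ s in (-r)..t, d s) :
    eLpNorm (deriv g) p (volume.restrict (Ioo (-r) 0)) =
      eLpNorm d p (volume.restrict (Ioo (-r) 0)) := by
  refine eLpNorm_congr_ae (deriv_ae_eq_of_eq_add_integral ?_ fun t ht =>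
    hg t (Ioo_subset_Icc_self ht))
  exact IntegrableOn.intervalIntegrable (by rwa [uIcc_of_le (by linarith)])

theorem eLpNorm_deriv_lt_top (hr : 0 ≤ r) (hg : MemW r p g) :
    eLpNorm (deriv g) p (volume.restrict (Ioo (-r) 0)) < ⊤ := by
  obtain ⟨d, hd, hdp, hgd⟩ := hg
  rwa [eLpNorm_deriv_eq hr hd hgd]

theorem memC0 (hr : 0 ≤ r) (hg : MemW r p g) : MemC0 r g := by
  obtain ⟨d, hd, -, hgd⟩ := hg
  have hprim := intervalIntegral.continuousOn_primitive_interval (a := -r) (b := 0)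
    (μ := volume) (by rwa [uIcc_of_le (by linarith)])
  rw [uIcc_of_le (by linarith)] at hprim
  exact (continuousOn_const.add hprim).congr hgd

theorem norm_sub_le (hr : 0 ≤ r) (hp : 1 ≤ p) (hg : MemW r p g) {a b : ℝ} (hb : -r ≤ b)
    (hba : b ≤ a) (ha : a ≤ 0) :
    ‖g a - g b‖ ≤
      (eLpNorm (deriv g) p (volume.restrict (Ioo (-r) 0))).toReal * (a - b) ^ hexp p := by
  obtain ⟨d, hd, hdp, hgd⟩ := hg
  have hdi : ∀ c ∈ Icc (-r) 0, IntervalIntegrable d volume (-r) c := fun c hc =>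
    (hd.mono_set (uIcc_of_le hc.1 ▸ Icc_subset_Icc_right hc.2)).intervalIntegrable
  have hsub : Ioc b a ⊆ Icc (-r) 0 := fun u hu => ⟨hb.trans hu.1.le, hu.2.trans ha⟩
  have hloc : eLpNorm d p (volume.restrict (Ioc b a)) ≤
      eLpNorm d p (volume.restrict (Ioo (-r) 0)) := by
    calc eLpNorm d p (volume.restrict (Ioc b a))
        ≤ eLpNorm d p (volume.restrict (Ioc (-r) 0)) :=
          eLpNorm_mono_measure d (Measure.restrict_mono (Ioc_subset_Ioc hb ha) le_rfl)
      _ = eLpNorm d p (volume.restrict (Ioo (-r) 0)) := by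
          rw [Measure.restrict_congr_set Ioo_ae_eq_Ioc]
  have ha' : a ∈ Icc (-r) 0 := ⟨hb.trans hba, ha⟩
  have hb' : b ∈ Icc (-r) 0 := ⟨hb, hba.trans ha⟩
  have hab : g a - g b = ∫ u in b..a, d u := by
    rw [hgd a ha', hgd b hb', add_sub_add_left_eq_sub,
      intervalIntegral.integral_interval_sub_left (hdi a ha') (hdi b hb')]
  rw [hab, eLpNorm_deriv_eq hr hd hgd]
  refine (norm_integral_le_eLpNorm_mul_rpow hba hp (hd.mono_set hsub).aestronglyMeasurable
    (hloc.trans_lt hdp).ne).trans ?_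
  gcongr
  exact hdp.ne

theorem memHol (hr : 0 ≤ r) (hp : 1 ≤ p) (hg : MemW r p g) :
    MemHol r (hexp p) g ∧ holderNorm r (hexp p) g ≤ sobNorm r p g := by
  set D := (eLpNorm (deriv g) p (volume.restrict (Ioo (-r) 0))).toReal
  have hratio : ∀ c ∈ hRatios (hexp p) (Icc (-r) 0) g, c ≤ D := by
    rintro _ ⟨a, ha, b, hb, hab, rfl⟩
    wlog hba : b < a generalizing a b
    · rw [norm_sub_rev, abs_sub_comm]
      exact this b hb a ha hab.symm (hab.lt_or_gt.resolve_right hba)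
    rw [abs_of_pos (sub_pos.2 hba), div_le_iff₀ (Real.rpow_pos_of_pos (sub_pos.2 hba) _)]
    exact hg.norm_sub_le hr hp hb.1 hba.le ha.2
  refine ⟨⟨hg.memC0 hr, D, hratio⟩, max_le ?_ ?_⟩
  · exact le_add_of_nonneg_right ENNReal.toReal_nonneg
  · exact (Real.sSup_le hratio ENNReal.toReal_nonneg).trans
      (le_add_of_nonneg_left (supN_nonneg r g))

end MemW

section Solution

variable {r : ℝ} {f : (ℝ → Vec n) → Vec n} {L : ℝ → ℝ} {x0 x : ℝ → Vec n}

theorem IsSol.continuousOn (hsol : IsSol r f x0 x ⊤) : ContinuousOn x (Ici (-r)) := by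
  simpa [IsSol, Ici] using hsol.1

theorem memC0_seg (hx : ContinuousOn x (Ici (-r))) {t : ℝ} (ht : 0 ≤ t) :
    MemC0 r (seg r x t) :=
  hx.comp (continuous_const_add t).continuousOn fun s hs => by
    simp only [mem_Ici]
    linarith [hs.1]

theorem tendsto_supN_seg_sub (hr : 0 ≤ r) (hx : ContinuousOn x (Ici (-r))) {u₀ : ℝ}
    (hu₀ : 0 ≤ u₀) :
    Tendsto (fun u => supN r (seg r x u - seg r x u₀)) (𝓝[Ici 0] u₀) (𝓝 0) := by
  have hK : ContinuousOn x (Icc (-r) (u₀ + 1)) := hx.mono Icc_subset_Ici_self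
  rw [Metric.tendsto_nhdsWithin_nhds]
  intro ε hε
  obtain ⟨δ, hδ, hxδ⟩ := Metric.uniformContinuousOn_iff_le.1
    (isCompact_Icc.uniformContinuousOn_of_continuous hK) (ε / 2) (half_pos hε)
  refine ⟨min δ 1, lt_min hδ one_pos, fun u (hu : 0 ≤ u) hdist => ?_⟩
  simp only [Real.dist_eq, lt_min_iff, abs_lt] at hdist
  have hmem : ∀ v, 0 ≤ v → v ≤ u₀ + 1 → ∀ s ∈ Icc (-r) 0, v + s ∈ Icc (-r) (u₀ + 1) :=
    fun v hv hv' s hs => ⟨by linarith [hs.1], by linarith [hs.2]⟩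
  have hsup : supN r (seg r x u - seg r x u₀) ≤ ε / 2 := by
    refine supN_le hr fun s hs => ?_
    rw [Pi.sub_apply, ← dist_eq_norm]
    refine hxδ _ (hmem u hu (by linarith) s hs) _ (hmem u₀ (by linarith) (by linarith) s hs) ?_
    rw [Real.dist_eq, add_sub_add_right_eq_sub, abs_le]
    constructor <;> linarith
  rw [Real.dist_eq, sub_zero, abs_of_nonneg (supN_nonneg r _)]
  linarith

theorem continuousOn_rhs_seg (hr : 0 ≤ r) (hf : GoodRHS r f L)
    (hx : ContinuousOn x (Ici (-r))) : ContinuousOn (fun u => f (seg r x u)) (Ici 0) := by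
  intro u₀ (hu₀ : 0 ≤ u₀)
  obtain ⟨R, hR⟩ := isCompact_Icc.bddAbove_image
    (continuous_norm.comp_continuousOn (hx.mono (Icc_subset_Ici_self : Icc (-r) (u₀ + 1) ⊆ _)))
  have hsegR : ∀ u, 0 ≤ u → u ≤ u₀ + 1 → supN r (seg r x u) ≤ R := fun u hu hu' =>
    supN_le hr fun s hs => hR ⟨u + s, ⟨by linarith [hs.1], by linarith [hs.2]⟩, rfl⟩
  refine tendsto_iff_norm_sub_tendsto_zero.2 (squeeze_zero'
    (Eventually.of_forall fun _ => norm_nonneg _) ?_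
    (by simpa using (tendsto_supN_seg_sub hr hx hu₀).const_mul (L R)))
  filter_upwards [self_mem_nhdsWithin, nhdsWithin_le_nhds (Iio_mem_nhds (lt_add_one u₀))]
    with u (hu : 0 ≤ u) (hu' : u < u₀ + 1)
  exact hf.2.2.2.2 R _ _ (memC0_seg hx hu) (memC0_seg hx hu₀) (hsegR u hu hu'.le)
    (hsegR u₀ hu₀ (by linarith))

theorem IsSol.hasDerivAt (hr : 0 ≤ r) (hf : GoodRHS r f L) (hsol : IsSol r f x0 x ⊤) {u : ℝ}
    (hu : 0 < u) : HasDerivAt x (f (seg r x u)) u := by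
  have hg := continuousOn_rhs_seg hr hf hsol.continuousOn
  have hint : IntervalIntegrable (fun w => f (seg r x w)) volume 0 u :=
    (hg.mono (by rw [uIcc_of_le hu.le]; exact Icc_subset_Ici_self)).intervalIntegrable
  have hF := (intervalIntegral.integral_hasDerivAt_right hint
    ((hg.mono Ioi_subset_Ici_self).stronglyMeasurableAtFilter isOpen_Ioi u hu)
    (hg.continuousAt (Ici_mem_nhds hu))).const_add (x 0)
  refine hF.congr_of_eventuallyEq (eventually_of_mem (Ioi_mem_nhds hu) fun w hw => ?_)
  exact hsol.2.2 w (le_of_lt hw) ENNReal.ofReal_lt_top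

theorem IsSol.deriv_seg_of_pos (hr : 0 ≤ r) (hf : GoodRHS r f L) (hsol : IsSol r f x0 x ⊤)
    {t s : ℝ} (hts : 0 < t + s) : deriv (seg r x t) s = f (seg r x (t + s)) :=
  (deriv_comp_const_add x t s).trans (hsol.hasDerivAt hr hf hts).deriv

theorem IsSol.deriv_seg_of_mem_Ioo (hsol : IsSol r f x0 x ⊤) {t s : ℝ}
    (hts : t + s ∈ Ioo (-r) 0) : deriv (seg r x t) s = deriv x0 (t + s) := by
  have hev : seg r x t =ᶠ[𝓝 s] fun s => x0 (t + s) :=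
    eventually_of_mem (((continuous_const_add t).continuousAt).preimage_mem_nhds
      (isOpen_Ioo.mem_nhds hts)) fun w hw => hsol.2.1 (Ioo_subset_Icc_self hw)
  rw [hev.deriv_eq, deriv_comp_const_add x0 t s]

end Solution

section Estimates

variable {r : ℝ} {p : ℝ≥0∞} {f : (ℝ → Vec n) → Vec n} {L : ℝ → ℝ} {x0 x : ℝ → Vec n}
  {β : ℝ → ℝ}

theorem IsSol.norm_rhs_seg_le (hr : 0 ≤ r) (hf : GoodRHS r f L) (hsol : IsSol r f x0 x ⊤)
    (hβ : ∀ u, 0 ≤ u → supN r (seg r x u) ≤ β u) (hβa : AntitoneOn β (Ici 0)) {u : ℝ}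
    (hu : 0 ≤ u) : ‖f (seg r x u)‖ ≤ L (β 0) * β u :=
  (hf.norm_le hr (memC0_seg hsol.continuousOn hu) ((hβ u hu).trans (hβa self_mem_Ici hu hu))).trans
    (mul_le_mul_of_nonneg_left (hβ u hu) (hf.2.2.2.1 _))

theorem IsSol.eLpNorm_deriv_seg_le (hr : 0 ≤ r) (hp : 1 ≤ p) (hf : GoodRHS r f L)
    (hsol : IsSol r f x0 x ⊤) (hβ : ∀ u, 0 ≤ u → supN r (seg r x u) ≤ β u)
    (hβa : AntitoneOn β (Ici 0)) (t : ℝ) :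
    eLpNorm (deriv (seg r x t)) p (volume.restrict (Ioo (-r) 0)) ≤
      eLpNorm (deriv (seg r x t)) p (volume.restrict (Ioo (-r) (-t))) +
        ENNReal.ofReal (max 1 r * (L (β 0) * β (max 0 (t - r)))) := by
  have hsplit :
      (Ioo (-r) 0 : Set ℝ) ≤ᵐ[volume] (Ioo (-r) (-t) ∪ Ioo (max (-r) (-t)) 0 : Set ℝ) := by
    filter_upwards [volume.ae_ne (-t)] with s hs hmem
    rcases hs.lt_or_gt with h | h
    · exact Or.inl ⟨hmem.1, h⟩
    · exact Or.inr ⟨max_lt hmem.1 h, hmem.2⟩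
  have hbound : ∀ s ∈ Ioo (max (-r) (-t)) 0,
      ‖deriv (seg r x t) s‖ ≤ L (β 0) * β (max 0 (t - r)) := by
    intro s hs
    obtain ⟨hrs, hts⟩ := max_lt_iff.1 hs.1
    have hpos : 0 < t + s := by linarith
    rw [hsol.deriv_seg_of_pos hr hf hpos]
    exact (hsol.norm_rhs_seg_le hr hf hβ hβa hpos.le).trans (mul_le_mul_of_nonneg_left
      (hβa (le_max_left 0 (t - r)) hpos.le (max_le hpos.le (by linarith))) (hf.2.2.2.1 _))
  calc eLpNorm (deriv (seg r x t)) p (volume.restrict (Ioo (-r) 0))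
      ≤ eLpNorm (deriv (seg r x t)) p
          (volume.restrict (Ioo (-r) (-t) ∪ Ioo (max (-r) (-t)) 0)) :=
        eLpNorm_mono_measure _ (Measure.restrict_mono_ae hsplit)
    _ ≤ eLpNorm (deriv (seg r x t)) p (volume.restrict (Ioo (-r) (-t))) +
          eLpNorm (deriv (seg r x t)) p (volume.restrict (Ioo (max (-r) (-t)) 0)) :=
        eLpNorm_restrict_union_le hp (stronglyMeasurable_deriv _).aestronglyMeasurable
          measurableSet_Ioo measurableSet_Ioo
    _ ≤ _ := by
        gcongr
        refine eLpNorm_restrict_Ioo_le_of_norm_le hp (le_max_left 1 r) ?_ hbound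
        linarith [le_max_left (-r) (-t), le_max_right 1 r]

theorem IsSol.eLpNorm_deriv_seg_Ioo_le (hsol : IsSol r f x0 x ⊤) {t : ℝ} (ht : 0 ≤ t) :
    eLpNorm (deriv (seg r x t)) p (volume.restrict (Ioo (-r) (-t))) ≤
      eLpNorm (deriv x0) p (volume.restrict (Ioo (-r) 0)) := by
  have hcongr : deriv (seg r x t) =ᵐ[volume.restrict (Ioo (-r) (-t))]
      fun s => deriv x0 (t + s) := by
    filter_upwards [ae_restrict_mem measurableSet_Ioo] with s hs
    exact hsol.deriv_seg_of_mem_Ioo ⟨by linarith [hs.1], by linarith [hs.2]⟩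
  have hshift : MeasurePreserving (fun s => t + s) (volume.restrict (Ioo (-r) (-t)))
      (volume.restrict (Ioo (t - r) 0)) := by
    have h := (measurePreserving_add_left volume t).restrict_preimage
      (measurableSet_Ioo (a := t - r) (b := 0))
    rwa [preimage_const_add_Ioo, sub_sub_cancel_left, zero_sub] at h
  rw [eLpNorm_congr_ae hcongr]
  calc eLpNorm (fun s => deriv x0 (t + s)) p (volume.restrict (Ioo (-r) (-t)))
      = eLpNorm (deriv x0) p (volume.restrict (Ioo (t - r) 0)) :=
        eLpNorm_comp_measurePreserving (g := deriv x0)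
          (stronglyMeasurable_deriv _).aestronglyMeasurable hshift
    _ ≤ eLpNorm (deriv x0) p (volume.restrict (Ioo (-r) 0)) :=
        eLpNorm_mono_measure _ (Measure.restrict_mono (Ioo_subset_Ioo (by linarith) le_rfl) le_rfl)

theorem IsSol.sobNorm_seg_le (hr : 0 ≤ r) (hp : 1 ≤ p) (hf : GoodRHS r f L)
    (hsol : IsSol r f x0 x ⊤) (hx0 : eLpNorm (deriv x0) p (volume.restrict (Ioo (-r) 0)) ≠ ⊤)
    (hβ : ∀ u, 0 ≤ u → supN r (seg r x u) ≤ β u) (hβa : AntitoneOn β (Ici 0)) {t : ℝ}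
    (ht : 0 ≤ t) :
    sobNorm r p (seg r x t) ≤ β t +
      (if t < r then (eLpNorm (deriv x0) p (volume.restrict (Ioo (-r) 0))).toReal else 0) +
        max 1 r * (L (β 0) * β (max 0 (t - r))) := by
  set E₁ := eLpNorm (deriv (seg r x t)) p (volume.restrict (Ioo (-r) (-t)))
  set K := max 1 r * (L (β 0) * β (max 0 (t - r)))
  have hK : 0 ≤ K := mul_nonneg (le_max_of_le_left zero_le_one) (mul_nonneg (hf.2.2.2.1 _)
    ((supN_nonneg r _).trans (hβ _ (le_max_left _ _))))
  have hE₁ : E₁ ≤ eLpNorm (deriv x0) p (volume.restrict (Ioo (-r) 0)) :=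
    hsol.eLpNorm_deriv_seg_Ioo_le ht
  have hE₁' : E₁.toReal ≤
      if t < r then (eLpNorm (deriv x0) p (volume.restrict (Ioo (-r) 0))).toReal else 0 := by
    split_ifs with htr
    · exact ENNReal.toReal_mono hx0 hE₁
    · simp [E₁, Ioo_eq_empty (by linarith : ¬-r < -t)]
  have hE : (eLpNorm (deriv (seg r x t)) p (volume.restrict (Ioo (-r) 0))).toReal ≤
      E₁.toReal + K := by
    have hfin : E₁ ≠ ⊤ := (hE₁.trans_lt hx0.lt_top).ne
    have h := ENNReal.toReal_mono (ENNReal.add_ne_top.2 ⟨hfin, ENNReal.ofReal_ne_top⟩)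
      (hsol.eLpNorm_deriv_seg_le hr hp hf hβ hβa t)
    rwa [ENNReal.toReal_add hfin ENNReal.ofReal_ne_top, ENNReal.toReal_ofReal hK] at h
  unfold sobNorm
  linarith [hβ t ht]

end Estimates

/-- The three terms bound `‖x_t‖_∞`, the `L^p` norm of `(x_t)' = f(x_{t+·})` on `(-t, 0)`, and
that of the translate of `ẋ₀` on `(-r, -t)`; the `+ 1` keeps the middle term strictly increasing
in `s`. -/
def sobolevKLBound (σ : ℝ → ℝ → ℝ) (L : ℝ → ℝ) (r : ℝ) (s t : ℝ) : ℝ :=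
  σ s t + max 1 r * (unitAverage L (σ s 0) + 1) * σ s (max 0 (t - r)) + s * Real.exp (r - t)

section SobolevKLBound

variable {σ : ℝ → ℝ → ℝ} {L : ℝ → ℝ}

theorem classKL_sobolevKLBound (hσ : ClassKL σ) (hL : Monotone L) (hL0 : ∀ s, 0 ≤ L s)
    (r : ℝ) : ClassKL (sobolevKLBound σ L r) := by
  obtain ⟨hσc, hσm, -⟩ := hσ.2.1 0 le_rfl
  have hpos : ∀ s, 0 ≤ s → 0 < max 1 r * (unitAverage L (σ s 0) + 1) := fun s _ =>
    mul_pos (lt_max_of_lt_left one_pos)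
      (by linarith [hL0 (σ s 0), hL.le_unitAverage (σ s 0)])
  have hcont : ContinuousOn (fun s => max 1 r * (unitAverage L (σ s 0) + 1)) (Ici 0) :=
    continuousOn_const.mul ((hL.continuous_unitAverage.comp_continuousOn hσc).add
      continuousOn_const)
  have hmono : MonotoneOn (fun s => max 1 r * (unitAverage L (σ s 0) + 1)) (Ici 0) :=
    fun a ha b hb hab => by
      dsimp only
      gcongr
      exact hL.monotone_unitAverage (hσm.monotoneOn ha hb hab)
  exact (hσ.add ((hσ.comp_delay r).mul_left hpos hcont hmono)).add (ClassKL.mul_exp r)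

theorem le_sobolevKLBound (hσ : ClassKL σ) (hL : Monotone L) (hL0 : ∀ s, 0 ≤ L s)
    {r H N D t : ℝ} (hH : 0 ≤ H) (hHN : H ≤ N) (hDN : D ≤ N) (ht : 0 ≤ t) :
    σ H t + (if t < r then D else 0) + max 1 r * (L (σ H 0) * σ H (max 0 (t - r))) ≤
      sobolevKLBound σ L r N t := by
  obtain ⟨hσ0, hσs, -⟩ := hσ
  have hN : 0 ≤ N := hH.trans hHN
  have ht₀ : (0 : ℝ) ≤ max 0 (t - r) := le_max_left _ _
  have hmono : ∀ u, 0 ≤ u → σ H u ≤ σ N u := fun u hu => (hσs u hu).2.1.monotoneOn hH hN hHN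
  have hL_le : L (σ H 0) ≤ unitAverage L (σ N 0) + 1 :=
    calc L (σ H 0) ≤ L (σ N 0) := hL (hmono 0 le_rfl)
      _ ≤ unitAverage L (σ N 0) + 1 := by linarith [hL.le_unitAverage (σ N 0)]
  have hdelay : max 1 r * (L (σ H 0) * σ H (max 0 (t - r))) ≤
      max 1 r * (unitAverage L (σ N 0) + 1) * σ N (max 0 (t - r)) := by
    rw [mul_assoc]
    exact mul_le_mul_of_nonneg_left (mul_le_mul hL_le (hmono _ ht₀) (hσ0 H _ hH ht₀)
      ((hL0 _).trans hL_le)) (le_max_of_le_left zero_le_one)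
  have hinit : (if t < r then D else 0) ≤ N * Real.exp (r - t) := by
    split_ifs with htr
    · exact hDN.trans (le_mul_of_one_le_right hN (Real.one_le_exp (by linarith)))
    · positivity
  unfold sobolevKLBound
  linarith [hmono t ht]

end SobolevKLBound

theorem stmt7_general (n : ℕ) (r : ℝ) (hr : 0 < r)
    (f : (ℝ → Vec n) → Vec n) (L : ℝ → ℝ) (hf : GoodRHS r f L)
    (p : ℝ≥0∞) (hp : 1 < p)
    (σ : ℝ → ℝ → ℝ) (hσ : ClassKL σ)
    (hUG : ∀ x0 x : ℝ → Vec n, MemHol r (hexp p) x0 → IsSol r f x0 x ⊤ →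
      ∀ t : ℝ, 0 ≤ t → holderNorm r (hexp p) (seg r x t) ≤ σ (holderNorm r (hexp p) x0) t) :
    ∃ ω : ℝ → ℝ → ℝ, ClassKL ω ∧ ∀ x0 x : ℝ → Vec n, MemW r p x0 → IsSol r f x0 x ⊤ →
      ∀ t : ℝ, 0 ≤ t → sobNorm r p (seg r x t) ≤ ω (sobNorm r p x0) t := by
  have hLmono : Monotone L := hf.2.2.1
  have hL0 : ∀ s, 0 ≤ L s := hf.2.2.2.1
  refine ⟨sobolevKLBound σ L r, classKL_sobolevKLBound hσ hLmono hL0 r, ?_⟩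
  intro x0 x hx0 hsol t ht
  obtain ⟨hHol, hHN⟩ := hx0.memHol hr.le hp.le
  have hH : 0 ≤ holderNorm r (hexp p) x0 := (supN_nonneg r x0).trans (le_max_left _ _)
  have hβ : ∀ u, 0 ≤ u → supN r (seg r x u) ≤ σ (holderNorm r (hexp p) x0) u := fun u hu =>
    (le_max_left _ _).trans (hUG x0 x hHol hsol u hu)
  calc sobNorm r p (seg r x t)
      ≤ _ := hsol.sobNorm_seg_le hr.le hp.le hf (hx0.eLpNorm_deriv_lt_top hr.le).ne hβ
        (hσ.2.2 _ hH).1 ht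
    _ ≤ sobolevKLBound σ L r (sobNorm r p x0) t :=
        le_sobolevKLBound hσ hLmono hL0 hH hHN (le_add_of_nonneg_left (supN_nonneg r x0)) ht

/-- UGAS in `C^{0,1-1/p}` implies UGAS in `W^{1,p}` for
`p ∈ (1,∞]`, for a forward-complete system on `C⁰`. -/
theorem stmt7 (n : ℕ) (hn : 1 ≤ n) (r : ℝ) (hr : 0 < r)
    (f : (ℝ → Vec n) → Vec n) (L : ℝ → ℝ) (hf : GoodRHS r f L)
    (p : ℝ≥0∞) (hp : 1 < p)
    (hFC : ∀ x0 : ℝ → Vec n, MemC0 r x0 → ∃ x : ℝ → Vec n, IsSol r f x0 x ⊤)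
    (σ : ℝ → ℝ → ℝ) (hσ : ClassKL σ)
    (hUG : ∀ x0 x : ℝ → Vec n, MemHol r (hexp p) x0 → IsSol r f x0 x ⊤ →
      ∀ t : ℝ, 0 ≤ t → holderNorm r (hexp p) (seg r x t) ≤ σ (holderNorm r (hexp p) x0) t) :
    ∃ ω : ℝ → ℝ → ℝ, ClassKL ω ∧ ∀ x0 x : ℝ → Vec n, MemW r p x0 → IsSol r f x0 x ⊤ →
      ∀ t : ℝ, 0 ≤ t → sobNorm r p (seg r x t) ≤ ω (sobNorm r p x0) t :=
  stmt7_general n r hr f L hf p hp σ hσ hUG
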